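/- arXiv:2505.10024 — 3 statements merged into one kernel-verified Lean document; each statement's English description precedes it below -/
import Mathlib

section
/- Let F be a Borel probability measure on ℝⁿ with finite second moments and mean m = E_F[x]. Let μ ∈ ℝⁿ, let Σ ∈ ℝ^{n×n} be symmetric positive definite, let γ₁, γ₂ ≥ 0, let Λ ∈ ℝ^{n×n} be symmetric positive semidefinite and let q ∈ ℝⁿ. If (m − μ)ᵀ Σ⁻¹ (m − μ) ≤ γ₁ and the matrix γ₂Σ − E_F[(x − μ)(x − μ)ᵀ] is positive semidefinite, then E_F[xᵀΛx + qᵀx] ≤ tr(Λ(γ₂Σ + μμᵀ)) + √γ₁ ‖Σ^{1/2}(q + 2Λμ)‖₂ + qᵀμ. -/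
/-!
Expanding around `μ`, `xᵀΛx + qᵀx = (x - μ)ᵀΛ(x - μ) + (q + 2Λμ)ᵀ(x - μ) + μᵀΛμ + qᵀμ`, so the
expectation is `tr(ΛS) + (q + 2Λμ)ᵀ(m - μ) + μᵀΛμ + qᵀμ` with `S` the second-moment matrix about
`μ`. Since `γ₂Σ - S ⪰ 0` and `Λ ⪰ 0`, `tr(Λ(γ₂Σ - S)) ≥ 0`. For the linear term write
`m - μ = Σ^{1/2} w`; then `wᵀw = (m - μ)ᵀΣ⁻¹(m - μ) ≤ γ₁` and Cauchy–Schwarz bounds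
`(q + 2Λμ)ᵀ Σ^{1/2} w` by `√γ₁ ‖Σ^{1/2}(q + 2Λμ)‖₂`.
-/

open Matrix MeasureTheory ENNReal

noncomputable section

/-- The `p`-norm on `ι → ℝ` for an extended-real exponent (`p = 2` is Euclidean). -/
def pNormE {ι : Type*} [Fintype ι] (p : ℝ≥0∞) (x : ι → ℝ) : ℝ :=
  if p = ∞ then ⨆ i, |x i| else (∑ i, |x i| ^ p.toReal) ^ (1 / p.toReal)

section
open scoped ComplexOrder

/-- The positive semidefinite square root of a positive semidefinite matrix
(restored: removed from Mathlib since the original was written). -/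
def Matrix.PosSemidef.sqrt {n 𝕜 : Type*} [Fintype n] [DecidableEq n] [RCLike 𝕜]
    {A : Matrix n n 𝕜} (hA : A.PosSemidef) : Matrix n n 𝕜 :=
  (hA.1.eigenvectorUnitary : Matrix n n 𝕜) *
    diagonal (fun i => ((Real.sqrt (hA.1.eigenvalues i) : ℝ) : 𝕜)) *
    (star hA.1.eigenvectorUnitary : Matrix n n 𝕜)

end

lemma pNormE_two_eq_sqrt_dotProduct {ι : Type*} [Fintype ι] (x : ι → ℝ) :
    pNormE 2 x = √(x ⬝ᵥ x) := by
  have habs : ∀ i, |x i| ^ (2 : ℝ) = x i * x i := fun i => by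
    rw [Real.rpow_two, sq_abs, sq]
  simp only [pNormE, ofNat_ne_top, if_false, toReal_ofNat, habs, Real.sqrt_eq_rpow, dotProduct]

lemma dotProduct_le_sqrt_mul_sqrt {ι : Type*} [Fintype ι] (v w : ι → ℝ) :
    v ⬝ᵥ w ≤ √(v ⬝ᵥ v) * √(w ⬝ᵥ w) := by
  simpa only [dotProduct, sq] using Real.sum_mul_le_sqrt_mul_sqrt Finset.univ v w

namespace Matrix

lemma IsSymm.dotProduct_mulVec_add_dotProduct_eq {ι R : Type*} [Fintype ι] [CommRing R]
    {A : Matrix ι ι R} (hA : A.IsSymm) (x μ q : ι → R) :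
    x ⬝ᵥ A *ᵥ x + q ⬝ᵥ x =
      (x - μ) ⬝ᵥ A *ᵥ (x - μ) + (q + (2 : R) • A *ᵥ μ) ⬝ᵥ (x - μ) + μ ⬝ᵥ A *ᵥ μ + q ⬝ᵥ μ := by
  have hsymm : μ ⬝ᵥ A *ᵥ (x - μ) = (x - μ) ⬝ᵥ A *ᵥ μ := by
    rw [dotProduct_mulVec, ← mulVec_transpose, hA.eq, dotProduct_comm]
  conv_lhs => rw [← sub_add_cancel x μ]
  simp only [mulVec_add, dotProduct_add, add_dotProduct, smul_dotProduct, hsymm,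
    dotProduct_comm (A *ᵥ μ) (x - μ), smul_eq_mul]
  ring

lemma dotProduct_mulVec_eq_sum_sum {ι R : Type*} [Fintype ι] [CommSemiring R]
    (A : Matrix ι ι R) (x : ι → R) :
    x ⬝ᵥ A *ᵥ x = ∑ i, ∑ j, A i j * (x j * x i) := by
  simp only [dotProduct, mulVec, Finset.mul_sum]
  exact Finset.sum_congr rfl fun i _ => Finset.sum_congr rfl fun j _ => by ring

variable {ι : Type*} [Fintype ι] [DecidableEq ι] {A B : Matrix ι ι ℝ}

lemma PosSemidef.sqrt_mul_self (hA : A.PosSemidef) : hA.sqrt * hA.sqrt = A := by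
  set U : Matrix ι ι ℝ := ↑hA.1.eigenvectorUnitary
  have hU : star U * U = 1 := by simp [U]
  calc hA.sqrt * hA.sqrt
      = U * (diagonal (fun i => √(hA.1.eigenvalues i)) *
          diagonal (fun i => √(hA.1.eigenvalues i))) * star U := by
        simp only [PosSemidef.sqrt, RCLike.ofReal_real_eq_id, id, Matrix.mul_assoc]
        rw [← Matrix.mul_assoc (star U), hU, Matrix.one_mul]
    _ = U * diagonal (fun i => hA.1.eigenvalues i) * star U := by
        simp only [diagonal_mul_diagonal, Real.mul_self_sqrt (hA.eigenvalues_nonneg _)]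
    _ = A := by
        conv_rhs => rw [hA.1.spectral_theorem, Unitary.conjStarAlgAut_apply]
        simp [U]

lemma PosSemidef.posSemidef_sqrt (hA : A.PosSemidef) : hA.sqrt.PosSemidef := by
  have hD : (diagonal fun i => √(hA.1.eigenvalues i)).PosSemidef :=
    posSemidef_diagonal_iff.mpr fun i => Real.sqrt_nonneg _
  simpa only [PosSemidef.sqrt, RCLike.ofReal_real_eq_id, id, star_eq_conjTranspose] using
    hD.mul_mul_conjTranspose_same hA.1.eigenvectorUnitary.1

lemma PosSemidef.isSymm_sqrt (hA : A.PosSemidef) : hA.sqrt.IsSymm :=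
  isHermitian_iff_isSymm.mp hA.posSemidef_sqrt.1

/-- `tr(AB) = tr(√A B √A)`, the trace of a positive semidefinite matrix. -/
lemma PosSemidef.trace_mul_nonneg (hA : A.PosSemidef) (hB : B.PosSemidef) :
    0 ≤ (A * B).trace := by
  have h := (hB.mul_mul_conjTranspose_same hA.sqrt).trace_nonneg
  rw [hA.posSemidef_sqrt.1, trace_mul_cycle] at h
  simpa only [hA.sqrt_mul_self] using h

lemma PosDef.dotProduct_le_sqrt_mul_pNormE_sqrt_mulVec (hA : A.PosDef) (v d : ι → ℝ) :
    v ⬝ᵥ d ≤ √(d ⬝ᵥ A⁻¹ *ᵥ d) * pNormE 2 (hA.posSemidef.sqrt *ᵥ v) := by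
  set R := hA.posSemidef.sqrt
  have hRR : R * R = A := hA.posSemidef.sqrt_mul_self
  have hR : IsUnit R.det := by
    rw [isUnit_iff_ne_zero, ← mul_self_ne_zero, ← det_mul, hRR]
    exact hA.det_pos.ne'
  have hRt : Rᵀ = R := hA.posSemidef.isSymm_sqrt
  set w := R⁻¹ *ᵥ d
  have hd : d = R *ᵥ w := by rw [mulVec_mulVec, mul_nonsing_inv R hR, one_mulVec]
  have hww : w ⬝ᵥ w = d ⬝ᵥ A⁻¹ *ᵥ d := by
    rw [dotProduct_mulVec, ← mulVec_transpose, transpose_nonsing_inv, hRt, mulVec_mulVec,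
      ← mul_inv_rev, hRR, dotProduct_comm]
  calc v ⬝ᵥ d = (R *ᵥ v) ⬝ᵥ w := by
        rw [hd, dotProduct_mulVec, ← mulVec_transpose, hRt]
    _ ≤ √((R *ᵥ v) ⬝ᵥ (R *ᵥ v)) * √(w ⬝ᵥ w) := dotProduct_le_sqrt_mul_sqrt _ _
    _ = √(d ⬝ᵥ A⁻¹ *ᵥ d) * pNormE 2 (R *ᵥ v) := by
        rw [hww, pNormE_two_eq_sqrt_dotProduct, mul_comm]

end Matrix

section Moments

variable {Ω ι : Type*} [MeasurableSpace Ω] [Fintype ι] {P : Measure Ω} {y : Ω → ι → ℝ}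

lemma integrable_dotProduct (hy : ∀ i, Integrable (fun ω => y ω i) P) (v : ι → ℝ) :
    Integrable (fun ω => v ⬝ᵥ y ω) P :=
  integrable_finsetSum _ fun i _ => (hy i).const_mul (v i)

lemma integral_dotProduct (hy : ∀ i, Integrable (fun ω => y ω i) P) (v : ι → ℝ) :
    ∫ ω, v ⬝ᵥ y ω ∂P = v ⬝ᵥ fun i => ∫ ω, y ω i ∂P := by
  simp only [dotProduct]
  rw [integral_finsetSum _ fun i _ => (hy i).const_mul (v i)]
  simp only [integral_const_mul]

lemma integrable_dotProduct_mulVec (hy : ∀ i j, Integrable (fun ω => y ω i * y ω j) P)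
    (A : Matrix ι ι ℝ) : Integrable (fun ω => y ω ⬝ᵥ A *ᵥ y ω) P := by
  simp only [dotProduct_mulVec_eq_sum_sum]
  exact integrable_finsetSum _ fun i _ => integrable_finsetSum _ fun j _ =>
    (hy j i).const_mul (A i j)

lemma integral_dotProduct_mulVec (hy : ∀ i j, Integrable (fun ω => y ω i * y ω j) P)
    (A : Matrix ι ι ℝ) :
    ∫ ω, y ω ⬝ᵥ A *ᵥ y ω ∂P = (A * of fun i j => ∫ ω, y ω i * y ω j ∂P).trace := by
  simp only [dotProduct_mulVec_eq_sum_sum, trace, diag, mul_apply, of_apply]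
  rw [integral_finsetSum _ fun i _ => integrable_finsetSum _ fun j _ =>
    (hy j i).const_mul (A i j)]
  refine Finset.sum_congr rfl fun i _ => ?_
  rw [integral_finsetSum _ fun j _ => (hy j i).const_mul (A i j)]
  simp only [integral_const_mul]

lemma MeasureTheory.Integrable.sub_const_mul_sub_const [IsFiniteMeasure P] {f g : Ω → ℝ}
    (hf : Integrable f P) (hg : Integrable g P) (hfg : Integrable (fun ω => f ω * g ω) P)
    (a b : ℝ) :
    Integrable (fun ω => (f ω - a) * (g ω - b)) P := by
  have h : (fun ω => (f ω - a) * (g ω - b)) =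
      fun ω => f ω * g ω - b * f ω - a * g ω + a * b := funext fun ω => by ring
  rw [h]
  exact ((hfg.sub (hf.const_mul b)).sub (hg.const_mul a)).add (integrable_const _)

end Moments

lemma integral_dotProduct_mulVec_add_dotProduct {ι : Type*} [Fintype ι] {P : Measure (ι → ℝ)}
    [IsProbabilityMeasure P] {A : Matrix ι ι ℝ} (hA : A.IsSymm) (μ q : ι → ℝ)
    (h₁ : ∀ i, Integrable (fun x => x i) P) (h₂ : ∀ i j, Integrable (fun x => x i * x j) P) :
    ∫ x, (x ⬝ᵥ A *ᵥ x + q ⬝ᵥ x) ∂P =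
      (A * of fun i j => ∫ x, (x i - μ i) * (x j - μ j) ∂P).trace
        + (q + (2 : ℝ) • A *ᵥ μ) ⬝ᵥ ((fun i => ∫ x, x i ∂P) - μ) + μ ⬝ᵥ A *ᵥ μ + q ⬝ᵥ μ := by
  have hc₁ : ∀ i, Integrable (fun x : ι → ℝ => (x - μ) i) P :=
    fun i => (h₁ i).sub (integrable_const _)
  have hc₂ : ∀ i j, Integrable (fun x : ι → ℝ => (x - μ) i * (x - μ) j) P :=
    fun i j => (h₁ i).sub_const_mul_sub_const (h₁ j) (h₂ i j) _ _
  have hmean : (fun i => ∫ x, (x - μ) i ∂P) = (fun i => ∫ x, x i ∂P) - μ :=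
    funext fun i => by simp [integral_sub (h₁ i) (integrable_const _)]
  have hquad := integrable_dotProduct_mulVec hc₂ A
  have hlin := integrable_dotProduct hc₁ (q + (2 : ℝ) • A *ᵥ μ)
  simp_rw [hA.dotProduct_mulVec_add_dotProduct_eq _ μ q]
  rw [integral_add _ (integrable_const _), integral_add _ (integrable_const _),
    integral_add hquad hlin, integral_dotProduct_mulVec hc₂, integral_dotProduct hc₁, hmean]
  · simp
  · exact hquad.add hlin
  · exact (hquad.add hlin).add (integrable_const _)

theorem expectation_quadratic_bound_general {n : ℕ}
    (F : Measure (Fin n → ℝ)) [IsProbabilityMeasure F]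
    (hmom1 : ∀ i, Integrable (fun x => x i) F)
    (hmom2 : ∀ i j, Integrable (fun x => x i * x j) F)
    (μ : Fin n → ℝ) (Sig : Matrix (Fin n) (Fin n) ℝ)
    (hSig : Sig.PosDef)
    (γ1 γ2 : ℝ)
    (Λ : Matrix (Fin n) (Fin n) ℝ) (hΛ : Λ.PosSemidef) (q : Fin n → ℝ)
    (hmean : ((fun i => ∫ x, x i ∂F) - μ) ⬝ᵥ
        Sig⁻¹.mulVec ((fun i => ∫ x, x i ∂F) - μ) ≤ γ1)
    (hcov : (γ2 • Sig
        - Matrix.of fun i j => ∫ x, (x i - μ i) * (x j - μ j) ∂F).PosSemidef) :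
    ∫ x, (x ⬝ᵥ Λ.mulVec x + q ⬝ᵥ x) ∂F ≤
      (Λ * (γ2 • Sig + Matrix.vecMulVec μ μ)).trace
        + Real.sqrt γ1 * pNormE 2 (hSig.posSemidef.sqrt.mulVec (q + (2 : ℝ) • Λ.mulVec μ))
        + q ⬝ᵥ μ := by
  set m : Fin n → ℝ := fun i => ∫ x, x i ∂F
  set S : Matrix (Fin n) (Fin n) ℝ := of fun i j => ∫ x, (x i - μ i) * (x j - μ j) ∂F
  set v := q + (2 : ℝ) • Λ *ᵥ μ
  have hexp : ∫ x, (x ⬝ᵥ Λ *ᵥ x + q ⬝ᵥ x) ∂F =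
      (Λ * S).trace + v ⬝ᵥ (m - μ) + μ ⬝ᵥ Λ *ᵥ μ + q ⬝ᵥ μ :=
    integral_dotProduct_mulVec_add_dotProduct (isHermitian_iff_isSymm.mp hΛ.1) μ q hmom1 hmom2
  have htrace : (Λ * S).trace ≤ γ2 * (Λ * Sig).trace := by
    have h := hΛ.trace_mul_nonneg hcov
    rwa [Matrix.mul_sub, trace_sub, Matrix.mul_smul, trace_smul, smul_eq_mul, sub_nonneg] at h
  have hlin : v ⬝ᵥ (m - μ) ≤ √γ1 * pNormE 2 (hSig.posSemidef.sqrt *ᵥ v) := by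
    refine (hSig.dotProduct_le_sqrt_mul_pNormE_sqrt_mulVec v (m - μ)).trans ?_
    rw [pNormE_two_eq_sqrt_dotProduct]
    gcongr
  have hrhs : (Λ * (γ2 • Sig + vecMulVec μ μ)).trace = γ2 * (Λ * Sig).trace + μ ⬝ᵥ Λ *ᵥ μ := by
    rw [Matrix.mul_add, trace_add, Matrix.mul_smul, trace_smul, mul_vecMulVec, trace_vecMulVec,
      smul_eq_mul, dotProduct_comm]
  rw [hexp, hrhs]
  linarith

/-- If `F` is a Borel probability measure with finite second moments,
mean `m` with `(m − μ)ᵀΣ⁻¹(m − μ) ≤ γ₁` and `γ₂Σ − E_F[(x − μ)(x − μ)ᵀ] ⪰ 0`, then for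
`Λ ⪰ 0` and `q`, `E_F[xᵀΛx + qᵀx] ≤ tr(Λ(γ₂Σ + μμᵀ)) + √γ₁‖Σ^{1/2}(q + 2Λμ)‖₂ + qᵀμ`. -/
theorem expectation_quadratic_bound {n : ℕ} (hn : 1 ≤ n)
    (F : Measure (Fin n → ℝ)) [IsProbabilityMeasure F]
    (hmom1 : ∀ i, Integrable (fun x => x i) F)
    (hmom2 : ∀ i j, Integrable (fun x => x i * x j) F)
    (μ : Fin n → ℝ) (Sig : Matrix (Fin n) (Fin n) ℝ)
    (hSig : Sig.PosDef)
    (γ1 γ2 : ℝ) (hγ1 : 0 ≤ γ1) (hγ2 : 0 ≤ γ2)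
    (Λ : Matrix (Fin n) (Fin n) ℝ) (hΛ : Λ.PosSemidef) (q : Fin n → ℝ)
    (hmean : ((fun i => ∫ x, x i ∂F) - μ) ⬝ᵥ
        Sig⁻¹.mulVec ((fun i => ∫ x, x i ∂F) - μ) ≤ γ1)
    (hcov : (γ2 • Sig
        - Matrix.of fun i j => ∫ x, (x i - μ i) * (x j - μ j) ∂F).PosSemidef) :
    ∫ x, (x ⬝ᵥ Λ.mulVec x + q ⬝ᵥ x) ∂F ≤
      (Λ * (γ2 • Sig + Matrix.vecMulVec μ μ)).trace
        + Real.sqrt γ1 * pNormE 2 (hSig.posSemidef.sqrt.mulVec (q + (2 : ℝ) • Λ.mulVec μ))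
        + q ⬝ᵥ μ :=
  expectation_quadratic_bound_general F hmom1 hmom2 μ Sig hSig γ1 γ2 Λ hΛ q hmean hcov
end
end

section
/- Let n ≥ 1, 1 ≤ r ≤ n, let A ∈ ℝ^{n×n} be invertible, x̂, μ ∈ ℝⁿ, γ̄ > 0, p ∈ [1,∞] with conjugate exponent q, let Y = {x̂ + Aζ : ζ ∈ ℝⁿ, ‖ζ‖_p ≤ √γ̄}, let S ∈ ℝ^{n×r} have rank r, and set Z = {z ∈ ℝ^r : μ + S z ∈ Y}. Assume the Slater condition ‖A⁻¹(μ − x̂)‖_p < √γ̄ (so 0 lies in the interior of the constraint defining Z). Then for every ω ∈ ℝ^r, sup_{z∈Z} ωᵀz = inf { (x̂ − μ)ᵀv + √γ̄ ‖Aᵀv‖_q : v ∈ ℝⁿ, Sᵀv = ω }. -/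
/-!
Translating by `μ`, the feasible set is `{z | S z ∈ Y}` for the core set `Y` centred at `x̂ - μ`,
a compact convex set whose support function `v ↦ (x̂ - μ) ⬝ v + √γ̄ ‖Aᵀ v‖_q` comes from Hölder's
inequality and its equality case. Since `ω ⬝ z = v ⬝ S z` whenever `Sᵀ v = ω`, weak duality is
immediate. Conversely, if `ω ⬝ z < τ` on the feasible set, strictly separating the graph of
`x ↦ x ⬝ v₀` over `Y` (where `Sᵀ v₀ = ω`, by the rank hypothesis) from `range S × {τ}` yields a
multiplier `v` with `Sᵀ v = ω` and `x ⬝ v < τ` on all of `Y`, so the dual value at `v` is below `τ`.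
-/

open Matrix MeasureTheory ENNReal

noncomputable section

/-- A core set `{x̂ + Aζ : ‖ζ‖_p ≤ √γ̄}`. -/
def coreSetE {n : ℕ} (xhat : Fin n → ℝ) (A : Matrix (Fin n) (Fin n) ℝ)
    (γbar : ℝ) (p : ℝ≥0∞) : Set (Fin n → ℝ) :=
  {x | ∃ ζ : Fin n → ℝ, pNormE p ζ ≤ Real.sqrt γbar ∧ x = xhat + A.mulVec ζ}

open scoped NNReal

section PNorm

variable {ι : Type*} [Fintype ι] {p q : ℝ≥0∞}

lemma pNormE_top (x : ι → ℝ) : pNormE ∞ x = ⨆ i, |x i| := if_pos rfl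

lemma pNormE_one (x : ι → ℝ) : pNormE 1 x = ∑ i, |x i| := by
  simp [pNormE]

lemma pNormE_of_ne_top (hp : p ≠ ∞) (x : ι → ℝ) :
    pNormE p x = (∑ i, |x i| ^ p.toReal) ^ (1 / p.toReal) := if_neg hp

lemma pNormE_eq_norm [Fact (1 ≤ p)] (x : ι → ℝ) : pNormE p x = ‖WithLp.toLp p x‖ := by
  rcases eq_or_ne p ∞ with rfl | hp
  · simp [pNormE_top, PiLp.norm_eq_ciSup]
  · rw [pNormE_of_ne_top hp, PiLp.norm_eq_sum (toReal_pos (zero_lt_one.trans_le Fact.out).ne' hp)]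
    simp

lemma pNormE_nonneg [Fact (1 ≤ p)] (x : ι → ℝ) : 0 ≤ pNormE p x := by
  rw [pNormE_eq_norm]; exact norm_nonneg _

lemma pNormE_smul [Fact (1 ≤ p)] (t : ℝ) (x : ι → ℝ) : pNormE p (t • x) = |t| * pNormE p x := by
  rw [pNormE_eq_norm, pNormE_eq_norm, WithLp.toLp_smul, norm_smul, Real.norm_eq_abs]

lemma setOf_pNormE_le_eq_image [Fact (1 ≤ p)] (γ : ℝ) :
    {x : ι → ℝ | pNormE p x ≤ γ} =
      WithLp.ofLp '' Metric.closedBall (0 : PiLp p fun _ : ι => ℝ) γ := by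
  ext x
  simp only [Set.mem_ofPred_eq, Set.mem_image, mem_closedBall_zero_iff, pNormE_eq_norm]
  exact ⟨fun hx => ⟨_, hx, rfl⟩, by rintro ⟨y, hy, rfl⟩; exact hy⟩

lemma dotProduct_le_pNormE_top_mul_pNormE_one (x y : ι → ℝ) :
    x ⬝ᵥ y ≤ pNormE ∞ x * pNormE 1 y := by
  rw [pNormE_top, pNormE_one, Finset.mul_sum]
  refine Finset.sum_le_sum fun i _ => (le_abs_self _).trans ?_
  rw [abs_mul]
  exact mul_le_mul_of_nonneg_right
    (le_ciSup (f := fun j => |x j|) (Set.finite_range _).bddAbove i) (abs_nonneg _)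

lemma dotProduct_le_pNormE_mul_pNormE [p.HolderConjugate q] (x y : ι → ℝ) :
    x ⬝ᵥ y ≤ pNormE p x * pNormE q y := by
  rcases eq_or_ne p ∞ with rfl | hp
  · obtain rfl := (HolderConjugate.eq_top_iff_eq_one ∞ q).mp rfl
    exact dotProduct_le_pNormE_top_mul_pNormE_one x y
  rcases eq_or_ne q ∞ with rfl | hq
  · obtain rfl := (HolderConjugate.eq_top_iff_eq_one ∞ p).mp rfl
    rw [dotProduct_comm, mul_comm]
    exact dotProduct_le_pNormE_top_mul_pNormE_one y x
  rw [pNormE_of_ne_top hp, pNormE_of_ne_top hq]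
  exact Real.inner_le_Lp_mul_Lq _ x y (HolderConjugate.toReal_of_ne_top hp hq)

lemma abs_sign_le_one (x : ℝ) : |(SignType.sign x : ℝ)| ≤ 1 := by
  cases SignType.sign x <;> simp

lemma exists_pNormE_top_le_one_le_dotProduct (u : ι → ℝ) :
    ∃ y : ι → ℝ, pNormE ∞ y ≤ 1 ∧ pNormE 1 u ≤ u ⬝ᵥ y := by
  refine ⟨fun i => SignType.sign (u i), ?_, ?_⟩
  · rw [pNormE_top]
    exact Real.iSup_le (fun i => abs_sign_le_one (u i)) zero_le_one
  · simp only [pNormE_one, dotProduct, self_mul_sign, le_refl]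

lemma exists_pNormE_one_le_one_le_dotProduct (u : ι → ℝ) :
    ∃ y : ι → ℝ, pNormE 1 y ≤ 1 ∧ pNormE ∞ u ≤ u ⬝ᵥ y := by
  classical
  rcases isEmpty_or_nonempty ι with hι | hι
  · exact ⟨0, by simp [pNormE_one], by simp [pNormE_top]⟩
  obtain ⟨i₀, hi₀⟩ := Finite.exists_max fun i => |u i|
  refine ⟨Pi.single i₀ (SignType.sign (u i₀)), ?_, ?_⟩
  · simp only [pNormE_one, Pi.apply_single (fun _ => abs) (fun _ => abs_zero),
      Finset.sum_pi_single', Finset.mem_univ, if_true]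
    exact abs_sign_le_one _
  · rw [pNormE_top, dotProduct_single, self_mul_sign]
    exact ciSup_le hi₀

lemma exists_pNormE_le_one_le_dotProduct [p.HolderConjugate q] (u : ι → ℝ) :
    ∃ y : ι → ℝ, pNormE p y ≤ 1 ∧ pNormE q u ≤ u ⬝ᵥ y := by
  rcases eq_or_ne p ∞ with rfl | hp
  · obtain rfl := (HolderConjugate.eq_top_iff_eq_one ∞ q).mp rfl
    exact exists_pNormE_top_le_one_le_dotProduct u
  rcases eq_or_ne q ∞ with rfl | hq
  · obtain rfl := (HolderConjugate.eq_top_iff_eq_one ∞ p).mp rfl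
    exact exists_pNormE_one_le_one_le_dotProduct u
  obtain ⟨⟨g, hg, hgu⟩, -⟩ := NNReal.isGreatest_Lp Finset.univ (fun i => Real.nnabs (u i))
    (HolderConjugate.toReal_of_ne_top hq hp)
  refine ⟨fun i => SignType.sign (u i) * g i, ?_, ?_⟩
  · have hy : ∀ i, |(SignType.sign (u i) : ℝ) * g i| ≤ g i := fun i => by
      rw [abs_mul, NNReal.abs_eq]
      exact mul_le_of_le_one_left (g i).2 (abs_sign_le_one _)
    have hg' : ∑ i, (g i : ℝ) ^ p.toReal ≤ 1 := by exact_mod_cast hg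
    rw [pNormE_of_ne_top hp]
    refine Real.rpow_le_one (by positivity) ((Finset.sum_le_sum fun i _ => ?_).trans hg')
      (by positivity)
    exact Real.rpow_le_rpow (abs_nonneg _) (hy i) toReal_nonneg
  · have := congrArg ((↑) : ℝ≥0 → ℝ) hgu
    push_cast [Real.coe_nnabs] at this
    rw [pNormE_of_ne_top hq, ← this]
    refine (Finset.sum_congr rfl fun i _ => ?_).le
    rw [← mul_assoc, self_mul_sign]

lemma isGreatest_dotProduct_setOf_pNormE_le [p.HolderConjugate q] {γ : ℝ} (hγ : 0 ≤ γ)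
    (u : ι → ℝ) :
    IsGreatest ((u ⬝ᵥ ·) '' {ζ | pNormE p ζ ≤ γ}) (γ * pNormE q u) := by
  have : Fact (1 ≤ p) := ⟨HolderConjugate.one_le p q⟩
  have : Fact (1 ≤ q) := ⟨HolderConjugate.one_le q p⟩
  have hHolder : ∀ ζ, u ⬝ᵥ ζ ≤ pNormE p ζ * pNormE q u := fun ζ => by
    rw [dotProduct_comm]; exact dotProduct_le_pNormE_mul_pNormE ζ u
  obtain ⟨y, hy, huy⟩ := exists_pNormE_le_one_le_dotProduct (p := p) (q := q) u
  have huy' : u ⬝ᵥ y = pNormE q u :=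
    le_antisymm ((hHolder y).trans (mul_le_of_le_one_left (pNormE_nonneg u) hy)) huy
  refine ⟨⟨γ • y, ?_, by simp only [dotProduct_smul, huy', smul_eq_mul]⟩, ?_⟩
  · rw [Set.mem_ofPred_eq, pNormE_smul, abs_of_nonneg hγ]
    exact mul_le_of_le_one_right hγ hy
  · rintro _ ⟨ζ, hζ, rfl⟩
    exact (hHolder ζ).trans (mul_le_mul_of_nonneg_right hζ (pNormE_nonneg u))

end PNorm

lemma mulVec_dotProduct_eq_transpose_mulVec_dotProduct {R ι κ : Type*} [CommSemiring R]
    [Fintype ι] [Fintype κ] (S : Matrix ι κ R) (z : κ → R) (v : ι → R) :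
    S *ᵥ z ⬝ᵥ v = Sᵀ *ᵥ v ⬝ᵥ z := by
  rw [dotProduct_comm, dotProduct_mulVec, mulVec_transpose]

lemma exists_dotProduct_add_mul {ι : Type*} [Fintype ι] (f : (ι → ℝ) × ℝ →L[ℝ] ℝ) :
    ∃ (a : ι → ℝ) (β : ℝ), ∀ x t, f (x, t) = x ⬝ᵥ a + t * β := by
  classical
  refine ⟨fun i => f (fun j => if i = j then 1 else 0, 0), f (0, 1), fun x t => ?_⟩
  have hx := LinearMap.pi_apply_eq_sum_univ (f.toLinearMap ∘ₗ LinearMap.inl ℝ _ ℝ) x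
  simp only [LinearMap.comp_apply, LinearMap.inl_apply, ContinuousLinearMap.coe_coe,
    smul_eq_mul] at hx
  have ht : ((0 : ι → ℝ), t) = t • (0, 1) := by simp
  rw [← Prod.fst_add_snd (x, t), map_add, hx, ht, map_smul, smul_eq_mul, dotProduct]

lemma exists_transpose_mulVec_eq_of_rank_eq {K ι κ : Type*} [Field K] [Fintype ι] [Fintype κ]
    {S : Matrix ι κ K} (hS : S.rank = Fintype.card κ) (ω : κ → K) :
    ∃ v, Sᵀ *ᵥ v = ω := by
  have hrange : LinearMap.range Sᵀ.mulVecLin = ⊤ := by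
    refine Submodule.eq_top_of_finrank_eq ?_
    rw [← Matrix.rank, rank_transpose, hS, Module.finrank_fintype_fun_eq_card]
  exact LinearMap.range_eq_top.mp hrange ω

/-- Separate the graph of `x ↦ x ⬝ᵥ v₀` over `K` from `range S × {τ}`; the separating functional
has positive slope in the last coordinate because `K` meets `range S`. -/
lemma exists_transpose_mulVec_eq_forall_dotProduct_lt {ι κ : Type*} [Fintype ι] [Fintype κ]
    (S : Matrix ι κ ℝ) {K : Set (ι → ℝ)} (hKconv : Convex ℝ K) (hKcomp : IsCompact K)
    {z₀ : κ → ℝ} (hz₀ : S *ᵥ z₀ ∈ K) (v₀ : ι → ℝ) {τ : ℝ}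
    (hτ : ∀ z, S *ᵥ z ∈ K → S *ᵥ z ⬝ᵥ v₀ < τ) :
    ∃ v, Sᵀ *ᵥ v = Sᵀ *ᵥ v₀ ∧ ∀ x ∈ K, x ⬝ᵥ v < τ := by
  set graph := (fun x => (x, x ⬝ᵥ v₀)) '' K
  set level := (LinearMap.range S.mulVecLin : Set (ι → ℝ)) ×ˢ ({τ} : Set ℝ)
  have hdisj : Disjoint graph level := by
    refine Set.disjoint_left.mpr ?_
    rintro _ ⟨x, hx, rfl⟩ ⟨⟨z, rfl⟩, hxτ⟩
    exact (hτ z hx).ne hxτ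
  obtain ⟨f, u₁, u₂, hgraph, hu, hlevel⟩ := geometric_hahn_banach_compact_closed
    (hKconv.is_linear_image ⟨fun x y => by simp [add_dotProduct], fun c x => by simp⟩)
    (hKcomp.image (by fun_prop))
    ((Submodule.convex _).prod (convex_singleton τ))
    ((Submodule.closed_of_finiteDimensional _).prod isClosed_singleton) hdisj
  obtain ⟨a, β, hf⟩ := exists_dotProduct_add_mul f
  have hgraph' : ∀ x ∈ K, x ⬝ᵥ a + x ⬝ᵥ v₀ * β < u₁ := fun x hx =>
    hf x _ ▸ hgraph _ ⟨x, hx, rfl⟩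
  have hlevel' : ∀ z, u₂ < S *ᵥ z ⬝ᵥ a + τ * β := fun z =>
    hf _ τ ▸ hlevel _ ⟨⟨z, rfl⟩, rfl⟩
  have ha : Sᵀ *ᵥ a = 0 := by
    refine dotProduct_eq_zero _ fun z => ?_
    have hline : ∀ s : ℝ, u₂ < s * (Sᵀ *ᵥ a ⬝ᵥ z) + τ * β := fun s => by
      have := hlevel' (s • z)
      rwa [mulVec_smul, smul_dotProduct, smul_eq_mul,
        mulVec_dotProduct_eq_transpose_mulVec_dotProduct] at this
    by_contra h
    have := hline ((u₂ - τ * β) / (Sᵀ *ᵥ a ⬝ᵥ z))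
    rw [div_mul_cancel₀ _ h] at this
    linarith
  have hz₀a : S *ᵥ z₀ ⬝ᵥ a = 0 := by
    rw [mulVec_dotProduct_eq_transpose_mulVec_dotProduct, ha, zero_dotProduct]
  have hK : ∀ x ∈ K, x ⬝ᵥ a + x ⬝ᵥ v₀ * β < τ * β := fun x hx => by
    have h0 := hlevel' 0
    rw [mulVec_zero, zero_dotProduct, zero_add] at h0
    linarith [hgraph' x hx]
  have hβ : 0 < β := by
    have hz₀τ := hτ z₀ hz₀
    have hz₀K := hK _ hz₀
    rw [hz₀a] at hz₀K
    nlinarith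
  refine ⟨v₀ + β⁻¹ • a, by rw [mulVec_add, mulVec_smul, ha, smul_zero, add_zero], fun x hx => ?_⟩
  have := hK x hx
  rw [dotProduct_add, dotProduct_smul, smul_eq_mul, ← mul_lt_mul_iff_left₀ hβ]
  field_simp
  linarith

lemma csSup_eq_csInf_of_forall_exists_le {α : Type*} [ConditionallyCompleteLinearOrder α]
    [DenselyOrdered α] {s t : Set α} (hs : s.Nonempty) (ht : t.Nonempty)
    (hle : ∀ a ∈ s, ∀ b ∈ t, a ≤ b) (hgap : ∀ c, (∀ a ∈ s, a < c) → ∃ b ∈ t, b ≤ c) :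
    sSup s = sInf t := by
  have hs_bdd : BddAbove s := ⟨_, fun a ha => hle a ha _ ht.some_mem⟩
  have ht_bdd : BddBelow t := ⟨_, fun b hb => hle _ hs.some_mem b hb⟩
  refine le_antisymm (csSup_le hs fun a ha => le_csInf ht (hle a ha)) ?_
  refine le_of_forall_gt_imp_ge_of_dense fun c hc => ?_
  obtain ⟨b, hb, hbc⟩ := hgap c fun a ha => (le_csSup hs_bdd ha).trans_lt hc
  exact (csInf_le ht_bdd hb).trans hbc

section CoreSet

variable {n : ℕ} {p q : ℝ≥0∞}

lemma coreSetE_eq_image (xhat : Fin n → ℝ) (A : Matrix (Fin n) (Fin n) ℝ) (γbar : ℝ) :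
    coreSetE xhat A γbar p = (fun ζ => xhat + A *ᵥ ζ) '' {ζ | pNormE p ζ ≤ √γbar} := by
  ext x
  simp [coreSetE, eq_comm]

lemma convex_coreSetE [Fact (1 ≤ p)] (xhat : Fin n → ℝ) (A : Matrix (Fin n) (Fin n) ℝ)
    (γbar : ℝ) : Convex ℝ (coreSetE xhat A γbar p) := by
  have := ((convex_closedBall (0 : PiLp p fun _ : Fin n => ℝ) √γbar).linear_image
    (A.mulVecLin ∘ₗ (WithLp.linearEquiv p ℝ _).toLinearMap)).translate xhat
  rw [Set.image_image] at this
  rwa [coreSetE_eq_image, setOf_pNormE_le_eq_image, Set.image_image]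

lemma isCompact_coreSetE [Fact (1 ≤ p)] (xhat : Fin n → ℝ) (A : Matrix (Fin n) (Fin n) ℝ)
    (γbar : ℝ) : IsCompact (coreSetE xhat A γbar p) := by
  rw [coreSetE_eq_image, setOf_pNormE_le_eq_image, Set.image_image]
  exact (isCompact_closedBall _ _).image (by fun_prop)

lemma add_mem_coreSetE_iff {xhat μ x : Fin n → ℝ} {A : Matrix (Fin n) (Fin n) ℝ} {γbar : ℝ} :
    μ + x ∈ coreSetE xhat A γbar p ↔ x ∈ coreSetE (xhat - μ) A γbar p := by
  simp only [coreSetE, Set.mem_ofPred_eq, sub_add_eq_add_sub, eq_sub_iff_add_eq, add_comm μ x]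

lemma mem_coreSetE_of_pNormE_le {xhat x : Fin n → ℝ} {A : Matrix (Fin n) (Fin n) ℝ} {γbar : ℝ}
    (hA : IsUnit A.det) (h : pNormE p (A⁻¹ *ᵥ (x - xhat)) ≤ √γbar) :
    x ∈ coreSetE xhat A γbar p :=
  ⟨_, h, by rw [mulVec_mulVec, mul_nonsing_inv A hA, one_mulVec, add_sub_cancel]⟩

lemma isGreatest_dotProduct_coreSetE [p.HolderConjugate q] (xhat : Fin n → ℝ)
    (A : Matrix (Fin n) (Fin n) ℝ) (γbar : ℝ) (v : Fin n → ℝ) :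
    IsGreatest ((· ⬝ᵥ v) '' coreSetE xhat A γbar p)
      (xhat ⬝ᵥ v + √γbar * pNormE q (Aᵀ *ᵥ v)) := by
  have h := (monotone_id.const_add (xhat ⬝ᵥ v)).map_isGreatest
    (isGreatest_dotProduct_setOf_pNormE_le (p := p) (q := q) (Real.sqrt_nonneg γbar) (Aᵀ *ᵥ v))
  rw [Set.image_image] at h
  have hpair : (fun ζ => (xhat + A *ᵥ ζ) ⬝ᵥ v) = fun ζ => xhat ⬝ᵥ v + id (Aᵀ *ᵥ v ⬝ᵥ ζ) :=
    funext fun ζ => by rw [add_dotProduct, mulVec_dotProduct_eq_transpose_mulVec_dotProduct]; rfl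
  rwa [coreSetE_eq_image, Set.image_image, hpair]

end CoreSet

theorem support_function_reduced_duality_general {n r : ℕ}
    (A : Matrix (Fin n) (Fin n) ℝ) (hA : IsUnit A.det)
    (xhat μ : Fin n → ℝ) (γbar : ℝ)
    (p q : ℝ≥0∞) (hpq : 1 / p + 1 / q = 1)
    (S : Matrix (Fin n) (Fin r) ℝ) (hS : S.rank = r)
    (hslater : pNormE p (A⁻¹.mulVec (μ - xhat)) < Real.sqrt γbar)
    (ω : Fin r → ℝ) :
    sSup ((fun z => ω ⬝ᵥ z) ''
        {z : Fin r → ℝ | μ + S.mulVec z ∈ coreSetE xhat A γbar p})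
      = sInf {s : ℝ | ∃ v : Fin n → ℝ, Sᵀ.mulVec v = ω ∧
          s = (xhat - μ) ⬝ᵥ v + Real.sqrt γbar * pNormE q (Aᵀ.mulVec v)} := by
  have : p.HolderConjugate q := holderConjugate_iff.mpr (by simpa only [one_div] using hpq)
  set Y := coreSetE (xhat - μ) A γbar p
  have hZ : {z | μ + S *ᵥ z ∈ coreSetE xhat A γbar p} = {z | S *ᵥ z ∈ Y} :=
    Set.ext fun z => add_mem_coreSetE_iff
  have h0 : S *ᵥ 0 ∈ Y := by
    rw [mulVec_zero, ← add_mem_coreSetE_iff, add_zero]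
    exact mem_coreSetE_of_pNormE_le hA hslater.le
  have hω : ∀ v z, Sᵀ *ᵥ v = ω → ω ⬝ᵥ z = S *ᵥ z ⬝ᵥ v := fun v z hv => by
    rw [mulVec_dotProduct_eq_transpose_mulVec_dotProduct, hv]
  obtain ⟨v₀, hv₀⟩ := exists_transpose_mulVec_eq_of_rank_eq (hS.trans (Fintype.card_fin r).symm) ω
  rw [hZ]
  refine csSup_eq_csInf_of_forall_exists_le ⟨_, 0, h0, rfl⟩ ⟨_, v₀, hv₀, rfl⟩ ?_ fun τ hτ => ?_
  · rintro _ ⟨z, hz, rfl⟩ _ ⟨v, hv, rfl⟩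
    dsimp only
    rw [hω v z hv]
    exact (isGreatest_dotProduct_coreSetE _ A γbar v).2 ⟨_, hz, rfl⟩
  · have hτ' : ∀ z, S *ᵥ z ∈ Y → S *ᵥ z ⬝ᵥ v₀ < τ := fun z hz =>
      hω v₀ z hv₀ ▸ hτ _ ⟨z, hz, rfl⟩
    have : Fact (1 ≤ p) := ⟨HolderConjugate.one_le p q⟩
    obtain ⟨v, hv, hvY⟩ := exists_transpose_mulVec_eq_forall_dotProduct_lt S
      (convex_coreSetE _ A γbar) (isCompact_coreSetE _ A γbar) h0 v₀ hτ'
    obtain ⟨x, hx, hxv⟩ :=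
      (isGreatest_dotProduct_coreSetE (p := p) (q := q) (xhat - μ) A γbar v).1
    exact ⟨_, ⟨v, hv.trans hv₀, rfl⟩, hxv ▸ (hvY x hx).le⟩

/-- Under the Slater condition `‖A⁻¹(μ − x̂)‖_p < √γ̄`, the support
function of `Z = {z : μ + Sz ∈ Y}` has the Lagrangian-dual representation
`sup_{z∈Z} ωᵀz = inf {(x̂ − μ)ᵀv + √γ̄‖Aᵀv‖_q : Sᵀv = ω}`. -/
theorem support_function_reduced_duality {n r : ℕ} (hr : 1 ≤ r) (hrn : r ≤ n)
    (A : Matrix (Fin n) (Fin n) ℝ) (hA : IsUnit A.det)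
    (xhat μ : Fin n → ℝ) (γbar : ℝ) (hγbar : 0 < γbar)
    (p q : ℝ≥0∞) (hp : 1 ≤ p) (hq : 1 ≤ q) (hpq : 1 / p + 1 / q = 1)
    (S : Matrix (Fin n) (Fin r) ℝ) (hS : S.rank = r)
    (hslater : pNormE p (A⁻¹.mulVec (μ - xhat)) < Real.sqrt γbar)
    (ω : Fin r → ℝ) :
    sSup ((fun z => ω ⬝ᵥ z) ''
        {z : Fin r → ℝ | μ + S.mulVec z ∈ coreSetE xhat A γbar p})
      = sInf {s : ℝ | ∃ v : Fin n → ℝ, Sᵀ.mulVec v = ω ∧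
          s = (xhat - μ) ⬝ᵥ v + Real.sqrt γbar * pNormE q (Aᵀ.mulVec v)} :=
  support_function_reduced_duality_general A hA xhat μ γbar p q hpq S hS hslater ω
end
end

section
/- Let d ≥ 1 and let g_1,…,g_m, h_1,…,h_m ∈ ℝ^d all be nonzero. Define Q = ½ Σ_{j=1}^m ( g_j g_jᵀ/‖g_j‖₂ + h_j h_jᵀ/‖h_j‖₂ ) and s = ½ Σ_{j=1}^m ( ‖g_j‖₂ + ‖h_j‖₂ ). Then for every index j₀ ∈ {1,…,m}, the (d+1)×(d+1) block matrices [Q, g_{j₀}/2; g_{j₀}ᵀ/2, s] and [Q, h_{j₀}/2; h_{j₀}ᵀ/2, s] are positive semidefinite. -/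
open Matrix MeasureTheory ENNReal

noncomputable section

/-- The symmetric block matrix `[Λ, β; βᵀ, c]`. -/
def blockMx {ι : Type*} (Λ : Matrix ι ι ℝ) (β : ι → ℝ) (c : ℝ) :
    Matrix (ι ⊕ Unit) (ι ⊕ Unit) ℝ :=
  Matrix.fromBlocks Λ (Matrix.of fun i _ => β i) (Matrix.of fun _ j => β j)
    (Matrix.of fun _ _ => c)

open scoped MatrixOrder

lemma pNormE_pos {ι : Type*} [Fintype ι] {p : ℝ≥0∞} (hp : p ≠ ∞) {x : ι → ℝ} (hx : x ≠ 0) :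
    0 < pNormE p x := by
  obtain ⟨i, hi⟩ := Function.ne_iff.mp hx
  rw [pNormE, if_neg hp]
  refine Real.rpow_pos_of_pos (Finset.sum_pos' (fun j _ => by positivity) ?_) _
  exact ⟨i, Finset.mem_univ i, Real.rpow_pos_of_pos (abs_pos.mpr hi) _⟩

namespace Matrix

theorem PosSemidef.fromBlocks_zero {m n R : Type*} [Fintype m] [Fintype n] [CommRing R]
    [PartialOrder R] [StarRing R] [IsOrderedAddMonoid R] {A : Matrix m m R} {D : Matrix n n R}
    (hA : A.PosSemidef) (hD : D.PosSemidef) : (fromBlocks A 0 0 D).PosSemidef := by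
  refine .of_dotProduct_mulVec_nonneg ?_ fun x => ?_
  · simp [IsHermitian, fromBlocks_conjTranspose, hA.1.eq, hD.1.eq]
  rw [fromBlocks_mulVec, ← Sum.elim_comp_inl_inr (star x)]
  simp only [zero_mulVec, add_zero, zero_add, sumElim_dotProduct_sumElim]
  exact add_nonneg (hA.dotProduct_mulVec_nonneg _) (hD.dotProduct_mulVec_nonneg _)

variable {n : Type*}

lemma blockMx_add (Λ₁ Λ₂ : Matrix n n ℝ) (β₁ β₂ : n → ℝ) (c₁ c₂ : ℝ) :
    blockMx (Λ₁ + Λ₂) (β₁ + β₂) (c₁ + c₂) = blockMx Λ₁ β₁ c₁ + blockMx Λ₂ β₂ c₂ := by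
  simp only [blockMx, fromBlocks_add]
  congr 1

lemma blockMx_smul (r : ℝ) (Λ : Matrix n n ℝ) (β : n → ℝ) (c : ℝ) :
    blockMx (r • Λ) (r • β) (r * c) = r • blockMx Λ β c := by
  simp only [blockMx, fromBlocks_smul]
  congr 1

lemma blockMx_eq_inv_smul_vecMulVec (v : n → ℝ) {a : ℝ} (ha : a ≠ 0) :
    blockMx (a⁻¹ • vecMulVec v v) v a =
      a⁻¹ • vecMulVec (Sum.elim v fun _ => a) (Sum.elim v fun _ => a) := by
  ext (i | i) (j | j) <;> simp [blockMx, vecMulVec_apply] <;> field_simp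

variable [Fintype n]

lemma posSemidef_blockMx_zero {Λ : Matrix n n ℝ} {c : ℝ} (hΛ : Λ.PosSemidef) (hc : 0 ≤ c) :
    (blockMx Λ 0 c).PosSemidef := by
  have hblocks : blockMx Λ 0 c = fromBlocks Λ 0 0 (diagonal fun _ => c) := by
    rw [blockMx]
    congr
  rw [hblocks]
  exact hΛ.fromBlocks_zero (PosSemidef.diagonal fun _ => hc)

lemma posSemidef_blockMx_inv_smul_vecMulVec (v : n → ℝ) {a : ℝ} (ha : 0 < a) :
    (blockMx (a⁻¹ • vecMulVec v v) v a).PosSemidef := by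
  rw [blockMx_eq_inv_smul_vecMulVec v ha.ne']
  exact (posSemidef_vecMulVec_self_star _).smul (inv_nonneg.mpr ha.le)

lemma PosSemidef.blockMx_of_le {Λ₀ Λ : Matrix n n ℝ} {β : n → ℝ} {c₀ c : ℝ}
    (h₀ : (blockMx Λ₀ β c₀).PosSemidef) (hΛ : Λ₀ ≤ Λ) (hc : c₀ ≤ c) :
    (blockMx Λ β c).PosSemidef := by
  have hsplit : blockMx Λ β c = blockMx Λ₀ β c₀ + blockMx (Λ - Λ₀) 0 (c - c₀) := by
    rw [← blockMx_add]; simp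
  rw [hsplit]
  exact h₀.add (posSemidef_blockMx_zero hΛ (sub_nonneg.mpr hc))

end Matrix

/-- The `j₀`-th summand alone already makes the block matrix positive semidefinite, since
`[a⁻¹ v vᵀ, v; vᵀ, a] = a⁻¹ (v, a) (v, a)ᵀ`; the remaining terms only add a positive semidefinite
block-diagonal matrix. -/
theorem posSemidef_blockMx_half_sum {ι n : Type*} [Fintype ι] [Fintype n] (a b : ι → ℝ)
    (v w : ι → n → ℝ) (ha : ∀ j, 0 ≤ a j) (hb : ∀ j, 0 ≤ b j) {j₀ : ι} (ha₀ : 0 < a j₀) :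
    (blockMx
        ((1 / 2 : ℝ) • ∑ j, ((a j)⁻¹ • vecMulVec (v j) (v j) + (b j)⁻¹ • vecMulVec (w j) (w j)))
        ((1 / 2 : ℝ) • v j₀) ((1 / 2 : ℝ) * ∑ j, (a j + b j))).PosSemidef := by
  rw [blockMx_smul]
  refine .smul (PosSemidef.blockMx_of_le
    (posSemidef_blockMx_inv_smul_vecMulVec (v j₀) ha₀) ?_ ?_) (by norm_num)
  · have hterm {c : ℝ} (hc : 0 ≤ c) (u : n → ℝ) : 0 ≤ c⁻¹ • vecMulVec u u :=
      ((posSemidef_vecMulVec_self_star u).smul (inv_nonneg.mpr hc)).nonneg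
    exact (le_add_of_nonneg_right (hterm (hb j₀) _)).trans <| Finset.single_le_sum
      (fun j _ => add_nonneg (hterm (ha j) _) (hterm (hb j) _)) (Finset.mem_univ j₀)
  · exact (le_add_of_nonneg_right (hb j₀)).trans
      (Finset.single_le_sum (fun j _ => add_nonneg (ha j) (hb j)) (Finset.mem_univ j₀))

theorem outer_product_block_posSemidef_general {d m : ℕ}
    (g h : Fin m → Fin d → ℝ) (hg : ∀ j, g j ≠ 0) (hh : ∀ j, h j ≠ 0)
    (j₀ : Fin m) :
    (blockMx
        ((1 / 2 : ℝ) • ∑ j, ((pNormE 2 (g j))⁻¹ • Matrix.vecMulVec (g j) (g j)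
          + (pNormE 2 (h j))⁻¹ • Matrix.vecMulVec (h j) (h j)))
        ((1 / 2 : ℝ) • g j₀)
        ((1 / 2 : ℝ) * ∑ j, (pNormE 2 (g j) + pNormE 2 (h j)))).PosSemidef ∧
    (blockMx
        ((1 / 2 : ℝ) • ∑ j, ((pNormE 2 (g j))⁻¹ • Matrix.vecMulVec (g j) (g j)
          + (pNormE 2 (h j))⁻¹ • Matrix.vecMulVec (h j) (h j)))
        ((1 / 2 : ℝ) • h j₀)
        ((1 / 2 : ℝ) * ∑ j, (pNormE 2 (g j) + pNormE 2 (h j)))).PosSemidef := by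
  have hgp j : 0 < pNormE 2 (g j) := pNormE_pos (by simp) (hg j)
  have hhp j : 0 < pNormE 2 (h j) := pNormE_pos (by simp) (hh j)
  refine ⟨posSemidef_blockMx_half_sum _ _ g h (fun j => (hgp j).le) (fun j => (hhp j).le)
    (hgp j₀), ?_⟩
  simp_rw [add_comm (_ • vecMulVec (g _) (g _)), add_comm (pNormE 2 (g _))]
  exact posSemidef_blockMx_half_sum _ _ h g (fun j => (hhp j).le) (fun j => (hgp j).le) (hhp j₀)

/-- With `Q = ½ Σ_j (g_j g_jᵀ/‖g_j‖₂ + h_j h_jᵀ/‖h_j‖₂)` and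
`s = ½ Σ_j (‖g_j‖₂ + ‖h_j‖₂)`, the block matrices `[Q, g_{j₀}/2; g_{j₀}ᵀ/2, s]`
and `[Q, h_{j₀}/2; h_{j₀}ᵀ/2, s]` are positive semidefinite. -/
theorem outer_product_block_posSemidef {d m : ℕ} (hd : 1 ≤ d)
    (g h : Fin m → Fin d → ℝ) (hg : ∀ j, g j ≠ 0) (hh : ∀ j, h j ≠ 0)
    (j₀ : Fin m) :
    (blockMx
        ((1 / 2 : ℝ) • ∑ j, ((pNormE 2 (g j))⁻¹ • Matrix.vecMulVec (g j) (g j)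
          + (pNormE 2 (h j))⁻¹ • Matrix.vecMulVec (h j) (h j)))
        ((1 / 2 : ℝ) • g j₀)
        ((1 / 2 : ℝ) * ∑ j, (pNormE 2 (g j) + pNormE 2 (h j)))).PosSemidef ∧
    (blockMx
        ((1 / 2 : ℝ) • ∑ j, ((pNormE 2 (g j))⁻¹ • Matrix.vecMulVec (g j) (g j)
          + (pNormE 2 (h j))⁻¹ • Matrix.vecMulVec (h j) (h j)))
        ((1 / 2 : ℝ) • h j₀)
        ((1 / 2 : ℝ) * ∑ j, (pNormE 2 (g j) + pNormE 2 (h j)))).PosSemidef :=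
  outer_product_block_posSemidef_general g h hg hh j₀
end
end
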